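/- Let (X_i, Y_i), i = 1, ..., n+1, be exchangeable random pairs, ω : X → Ω a deterministic measurable feature map, s : X × Y → ℝ a fixed measurable score, and ψ : Ω → ℝ a fixed measurable function. Define residuals E_i = s(X_i, Y_i) − ψ(ω(X_i)) and let q̂ be the ⌈(n+1)(1−α)⌉-th smallest of E_1, ..., E_n (assuming this index is at most n). Then P(s(X_{n+1}, Y_{n+1}) ≤ ψ(ω(X_{n+1})) + q̂) ≥ 1 − α. -/

import Mathlib

open MeasureTheory

/-- The `k`-th smallest value among `x 0, ..., x (n-1)` (for `1 ≤ k ≤ n`). -/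
noncomputable def orderStat {n : ℕ} (x : Fin n → ℝ) (k : ℕ) : ℝ :=
  sInf {t : ℝ | k ≤ (Finset.univ.filter (fun i => x i ≤ t)).card}

/-! Call an index `j` low when fewer than `k = ⌈(n + 1)(1 - α)⌉` residuals lie strictly below
`E j`. Whatever the residuals are, at least `k` of the `n + 1` indices are low (the `k` smallest
ones, ties included), and by exchangeability every index is low with the same probability, so the
test index is low with probability at least `k / (n + 1) ≥ 1 - α`. When the test index is low,
fewer than `k` calibration residuals lie strictly below its residual, which therefore is at most
the `k`-th smallest calibration residual `q̂`. -/

open Finset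
open scoped ENNReal

section Rank

variable {ι α : Type*} [Fintype ι] [LinearOrder α]

def rankLT (e : ι → α) (j : ι) : ℕ := #{i | e i < e j}

lemma rankLT_comp_perm (e : ι → α) (σ : Equiv.Perm ι) (j : ι) :
    rankLT (e ∘ σ) j = rankLT e (σ j) := by
  classical
  simp only [rankLT, card_filter, Function.comp_apply]
  exact Equiv.sum_comp σ (fun i => if e i < e (σ j) then 1 else 0)

lemma le_card_filter_rankLT_lt (e : ι → α) {k : ℕ} (hk : k ≤ Fintype.card ι) :
    k ≤ #{j | rankLT e j < k} := by
  classical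
  set B : Finset ι := {j | rankLT e j < k}
  by_contra! hB
  have hBc : (univ \ B).Nonempty := by
    rw [sdiff_nonempty]
    exact fun h => (card_le_card h).not_gt (by rw [card_univ]; omega)
  -- an entry of minimal value outside `B` has every strictly smaller entry in `B`
  obtain ⟨j, hj, hmin⟩ := exists_min_image (univ \ B) e hBc
  have hbelow : ({i | e i < e j} : Finset ι) ⊆ B := by
    intro i hi
    by_contra hiB
    exact (mem_filter.mp hi).2.not_ge (hmin i (by simpa using hiB))
  have hjrank : rankLT e j < k := (card_le_card hbelow).trans_lt hB
  exact (mem_sdiff.mp hj).2 (by simpa [B] using hjrank)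

lemma rankLT_last_eq {n : ℕ} (e : Fin (n + 1) → α) :
    rankLT e (Fin.last n) = #{i : Fin n | e i.castSucc < e (Fin.last n)} := by
  simp only [rankLT, card_filter, Fin.sum_univ_castSucc, lt_irrefl, if_false, add_zero]

end Rank

lemma le_orderStat_of_card_lt {n k : ℕ} (x : Fin n → ℝ) {t : ℝ} (hkn : k ≤ n)
    (h : #{i | x i < t} < k) : t ≤ orderStat x k := by
  apply le_csInf
  · obtain ⟨u, hu⟩ := (univ.image x).exists_le
    refine ⟨u, ?_⟩
    have hall : ({i | x i ≤ u} : Finset (Fin n)) = univ :=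
      filter_true_of_mem fun i _ => hu (x i) (mem_image_of_mem x (mem_univ i))
    simpa [hall] using hkn
  · intro u hu
    by_contra! hut
    have hsub : ({i | x i ≤ u} : Finset (Fin n)) ⊆ ({i | x i < t} : Finset (Fin n)) :=
      monotone_filter_right _ fun _ _ hi => hi.trans_lt hut
    exact ((card_le_card hsub).trans_lt h).not_ge hu

lemma ofReal_le_of_natCeil_le_mul {m : ℕ} (hm : m ≠ 0) {c : ℝ} {p : ℝ≥0∞}
    (h : (⌈m * c⌉₊ : ℝ≥0∞) ≤ m * p) : ENNReal.ofReal c ≤ p := by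
  have hceil : (m : ℝ≥0∞) * ENNReal.ofReal c ≤ ⌈m * c⌉₊ := by
    rw [← ENNReal.ofReal_natCast m, ← ENNReal.ofReal_mul (Nat.cast_nonneg m),
      ← ENNReal.ofReal_natCast]
    exact ENNReal.ofReal_le_ofReal (Nat.le_ceil _)
  exact (ENNReal.mul_le_mul_iff_right (by simpa) (ENNReal.natCast_ne_top m)).mp
    (hceil.trans h)

section Exchangeable

variable {Ω ι β γ : Type*} [MeasurableSpace Ω] [MeasurableSpace β] [MeasurableSpace γ]

def Exchangeable (P : Measure Ω) (Z : ι → Ω → β) : Prop :=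
  ∀ σ : Equiv.Perm ι, P.map (fun ω i => Z (σ i) ω) = P.map (fun ω i => Z i ω)

variable {P : Measure Ω} {Z : ι → Ω → β}

lemma Exchangeable.comp (hZ : Exchangeable P Z) (hZm : ∀ i, Measurable (Z i)) {f : β → γ}
    (hf : Measurable f) : Exchangeable P (fun i ω => f (Z i ω)) := by
  intro σ
  have hF : Measurable fun (z : ι → β) i => f (z i) :=
    measurable_pi_lambda _ fun i => hf.comp (measurable_pi_apply i)
  have h := congrArg (Measure.map fun (z : ι → β) i => f (z i)) (hZ σ)
  rwa [Measure.map_map hF (measurable_pi_lambda _ fun i => hZm (σ i)),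
    Measure.map_map hF (measurable_pi_lambda _ hZm)] at h

end Exchangeable

section Pigeonhole

variable {Ω ι : Type*} [MeasurableSpace Ω] [Fintype ι]

open Classical in
lemma natCast_le_sum_measure_of_le_card {P : Measure Ω} [IsProbabilityMeasure P]
    {A : ι → Set Ω} (hA : ∀ j, MeasurableSet (A j)) {k : ℕ}
    (hcover : ∀ ω, k ≤ #{j | ω ∈ A j}) : (k : ℝ≥0∞) ≤ ∑ j, P (A j) := by
  calc (k : ℝ≥0∞) = ∫⁻ _, (k : ℝ≥0∞) ∂P := by simp
    _ ≤ ∫⁻ ω, ∑ j, (A j).indicator 1 ω ∂P := lintegral_mono fun ω => by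
        simpa [Set.indicator_apply] using hcover ω
    _ = ∑ j, P (A j) := by
        rw [lintegral_finsetSum _ fun j _ => measurable_one.indicator (hA j)]
        simp only [lintegral_indicator_one (hA _)]

end Pigeonhole

section Conformal

variable {Ω ι : Type*} [MeasurableSpace Ω] [Fintype ι] {P : Measure Ω} {E : ι → Ω → ℝ}

lemma measurableSet_rankLT_lt (j : ι) (k : ℕ) :
    MeasurableSet {e : ι → ℝ | rankLT e j < k} := by
  classical
  have : Measurable fun e : ι → ℝ => rankLT e j := by
    simp only [rankLT, card_filter]
    exact Finset.measurable_sum _ fun i _ =>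
      Measurable.ite (measurableSet_lt (measurable_pi_apply i) (measurable_pi_apply j))
        measurable_const measurable_const
  exact this (measurableSet_Iio (a := k))

lemma Exchangeable.measure_rankLT_lt_eq (hE : Exchangeable P E) (hEm : ∀ i, Measurable (E i))
    (k : ℕ) (j j' : ι) :
    P {ω | rankLT (fun i => E i ω) j < k} = P {ω | rankLT (fun i => E i ω) j' < k} := by
  classical
  set σ := Equiv.swap j' j
  have hσ : σ j' = j := Equiv.swap_apply_left j' j
  have hpre : {ω | rankLT (fun i => E i ω) j < k} =
      (fun ω i => E (σ i) ω) ⁻¹' {e | rankLT e j' < k} := by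
    ext ω
    simp only [Set.mem_ofPred_eq, Set.mem_preimage]
    rw [show (fun i => E (σ i) ω) = (fun i => E i ω) ∘ σ from rfl, rankLT_comp_perm, hσ]
  rw [hpre, ← Measure.map_apply (measurable_pi_lambda _ fun i => hEm (σ i))
    (measurableSet_rankLT_lt j' k), hE σ,
    Measure.map_apply (measurable_pi_lambda _ hEm) (measurableSet_rankLT_lt j' k)]
  rfl

lemma Exchangeable.natCast_le_card_mul_measure_rankLT_lt [IsProbabilityMeasure P]
    (hE : Exchangeable P E) (hEm : ∀ i, Measurable (E i)) {k : ℕ} (hk : k ≤ Fintype.card ι)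
    (j : ι) : (k : ℝ≥0∞) ≤ Fintype.card ι * P {ω | rankLT (fun i => E i ω) j < k} := by
  have hV : Measurable fun ω i => E i ω := measurable_pi_lambda _ hEm
  calc (k : ℝ≥0∞) ≤ ∑ j', P {ω | rankLT (fun i => E i ω) j' < k} :=
        natCast_le_sum_measure_of_le_card (fun j' => hV (measurableSet_rankLT_lt j' k))
          fun ω => by convert le_card_filter_rankLT_lt (fun i => E i ω) hk; rfl
    _ = Fintype.card ι * P {ω | rankLT (fun i => E i ω) j < k} := by
        simp only [fun j' => hE.measure_rankLT_lt_eq hEm k j' j, sum_const, card_univ,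
          nsmul_eq_mul]

end Conformal

theorem scqr_coverage_general
    {ΩS 𝒳 𝒴 𝒪 : Type*} [MeasurableSpace ΩS] [MeasurableSpace 𝒳]
    [MeasurableSpace 𝒴] [MeasurableSpace 𝒪]
    (P : Measure ΩS) [IsProbabilityMeasure P]
    (n : ℕ) (X : Fin (n + 1) → ΩS → 𝒳) (Y : Fin (n + 1) → ΩS → 𝒴)
    (hX : ∀ i, Measurable (X i)) (hY : ∀ i, Measurable (Y i))
    (hexch : ∀ σ : Equiv.Perm (Fin (n + 1)),
      P.map (fun ω' (i : Fin (n + 1)) => (X (σ i) ω', Y (σ i) ω')) =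
        P.map (fun ω' (i : Fin (n + 1)) => (X i ω', Y i ω')))
    (s : 𝒳 × 𝒴 → ℝ) (hs : Measurable s)
    (ω : 𝒳 → 𝒪) (hω : Measurable ω)
    (ψ : 𝒪 → ℝ) (hψ : Measurable ψ)
    (α : ℝ)
    (hk : ⌈((n : ℝ) + 1) * (1 - α)⌉₊ ≤ n) :
    ENNReal.ofReal (1 - α) ≤
      P {ω' | s (X (Fin.last n) ω', Y (Fin.last n) ω') ≤
          ψ (ω (X (Fin.last n) ω')) +
            orderStat
              (fun i : Fin n =>
                s (X i.castSucc ω', Y i.castSucc ω') - ψ (ω (X i.castSucc ω')))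
              ⌈((n : ℝ) + 1) * (1 - α)⌉₊} := by
  set k := ⌈((n : ℝ) + 1) * (1 - α)⌉₊
  set E : Fin (n + 1) → ΩS → ℝ := fun i ω' => s (X i ω', Y i ω') - ψ (ω (X i ω'))
  have hEm : ∀ i, Measurable (E i) := fun i =>
    (hs.comp ((hX i).prodMk (hY i))).sub (hψ.comp (hω.comp (hX i)))
  have hE : Exchangeable P E :=
    Exchangeable.comp (Z := fun i ω' => (X i ω', Y i ω')) hexch
      (fun i => (hX i).prodMk (hY i)) (hs.sub (hψ.comp (hω.comp measurable_fst)))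
  have hbound := hE.natCast_le_card_mul_measure_rankLT_lt hEm (k := k)
    (by rw [Fintype.card_fin]; omega) (Fin.last n)
  have hceil := ofReal_le_of_natCeil_le_mul (Nat.succ_ne_zero n) (c := 1 - α)
    (p := P {ω' | rankLT (fun i => E i ω') (Fin.last n) < k})
  rw [Fintype.card_fin] at hbound
  push_cast at hceil hbound
  refine (hceil hbound).trans (measure_mono fun ω' hlow => ?_)
  rw [Set.mem_ofPred_eq, rankLT_last_eq] at hlow
  have hq := le_orderStat_of_card_lt _ hk hlow
  simp only [Set.mem_ofPred_eq, E] at hq ⊢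
  linarith

/-- Marginal coverage of Score Conformalized Quantile Regression (SCQR):
with residuals `E_i = s (X_i, Y_i) - ψ (ω (X_i))` and `q̂` the
`⌈(n+1)(1-α)⌉`-th smallest of `E_1, ..., E_n`, the test point satisfies
`s (X_{n+1}, Y_{n+1}) ≤ ψ (ω (X_{n+1})) + q̂` with probability `≥ 1 - α`. -/
theorem scqr_coverage
    {ΩS 𝒳 𝒴 𝒪 : Type*} [MeasurableSpace ΩS] [MeasurableSpace 𝒳]
    [MeasurableSpace 𝒴] [MeasurableSpace 𝒪]
    (P : Measure ΩS) [IsProbabilityMeasure P]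
    (n : ℕ) (X : Fin (n + 1) → ΩS → 𝒳) (Y : Fin (n + 1) → ΩS → 𝒴)
    (hX : ∀ i, Measurable (X i)) (hY : ∀ i, Measurable (Y i))
    (hexch : ∀ σ : Equiv.Perm (Fin (n + 1)),
      P.map (fun ω' (i : Fin (n + 1)) => (X (σ i) ω', Y (σ i) ω')) =
        P.map (fun ω' (i : Fin (n + 1)) => (X i ω', Y i ω')))
    (s : 𝒳 × 𝒴 → ℝ) (hs : Measurable s)
    (ω : 𝒳 → 𝒪) (hω : Measurable ω)
    (ψ : 𝒪 → ℝ) (hψ : Measurable ψ)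
    (α : ℝ) (hα0 : 0 < α) (hα1 : α < 1)
    (hk : ⌈((n : ℝ) + 1) * (1 - α)⌉₊ ≤ n) :
    ENNReal.ofReal (1 - α) ≤
      P {ω' | s (X (Fin.last n) ω', Y (Fin.last n) ω') ≤
          ψ (ω (X (Fin.last n) ω')) +
            orderStat
              (fun i : Fin n =>
                s (X i.castSucc ω', Y i.castSucc ω') - ψ (ω (X i.castSucc ω')))
              ⌈((n : ℝ) + 1) * (1 - α)⌉₊} :=
  scqr_coverage_general P n X Y hX hY hexch s hs ω hω ψ hψ α hk
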